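/- arXiv:2512.22434 — 2 statements merged into one kernel-verified Lean document; each statement's English description precedes it below -/
import Mathlib

section
/- Let $n\ge 1$, $N=2^n$, and let $S^{(1)}_j := \sum_{s=0}^{N-1} s\,(-1)^{j\cdot s}$ where $j\cdot s$ is the bitwise inner product mod 2. Then $S^{(1)}_0 = N(N-1)/2$, $S^{(1)}_{2^i} = -N\,2^{i-1} = -2^{n+i-1}$ for each $i\in\{0,\dots,n-1\}$, and $S^{(1)}_j = 0$ whenever the Hamming weight of $j$ is at least 2. -/
/-- Bitwise inner product (number of common set bits among the low `n` bits). -/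
def bip (n j s : ℕ) : ℕ :=
  ∑ i ∈ Finset.range n, if j.testBit i ∧ s.testBit i then 1 else 0

/-- Hamming weight of the low `n` bits of `j`. -/
def hw (n j : ℕ) : ℕ :=
  ∑ i ∈ Finset.range n, if j.testBit i then 1 else 0

lemma sum_split (N : ℕ) (f : ℕ → ℝ) :
    ∑ s ∈ Finset.range (N + N), f s
      = ∑ t ∈ Finset.range N, f t + ∑ t ∈ Finset.range N, f (N + t) := by
  rw [Finset.range_add, Finset.sum_union (Finset.disjoint_range_addLeftEmbedding N _),
    Finset.sum_map]
  rfl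

lemma bip_succ (n j s : ℕ) :
    bip (n + 1) j s = bip n j s + if j.testBit n ∧ s.testBit n then 1 else 0 :=
  Finset.sum_range_succ _ _

lemma bip_add_pow (n j t : ℕ) (ht : t < 2 ^ n) : bip n j (2 ^ n + t) = bip n j t := by
  unfold bip
  apply Finset.sum_congr rfl
  intro i hi
  rw [Nat.testBit_two_pow_add_gt (Finset.mem_range.mp hi)]

lemma testBit_top (n t : ℕ) (ht : t < 2 ^ n) : (2 ^ n + t).testBit n = true := by
  rw [Nat.testBit_two_pow_add_eq, Nat.testBit_eq_false_of_lt ht]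
  rfl

lemma rec_split (n j : ℕ) (f : ℕ → ℝ) :
    ∑ s ∈ Finset.range (2 ^ (n + 1)), f s * (-1 : ℝ) ^ bip (n + 1) j s
      = ∑ t ∈ Finset.range (2 ^ n), f t * (-1 : ℝ) ^ bip n j t
        + (if j.testBit n then -1 else 1 : ℝ) *
          ∑ t ∈ Finset.range (2 ^ n), f (2 ^ n + t) * (-1 : ℝ) ^ bip n j t := by
  have h2 : (2 : ℕ) ^ (n + 1) = 2 ^ n + 2 ^ n := by ring
  rw [h2, sum_split, Finset.mul_sum]
  congr 1
  · apply Finset.sum_congr rfl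
    intro t ht
    rw [bip_succ, Nat.testBit_eq_false_of_lt (Finset.mem_range.mp ht)]
    simp
  · apply Finset.sum_congr rfl
    intro t ht
    have ht' := Finset.mem_range.mp ht
    rw [bip_succ, bip_add_pow n j t ht', testBit_top n t ht']
    by_cases hj : j.testBit n <;> simp [hj, pow_succ] <;> ring

/-- The character sum. -/
lemma lemA (n : ℕ) : ∀ j : ℕ,
    (∑ s ∈ Finset.range (2 ^ n), (-1 : ℝ) ^ bip n j s)
      = if ∀ i < n, j.testBit i = false then (2 ^ n : ℝ) else 0 := by
  induction n with
  | zero => intro j; simp [bip]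
  | succ n ih =>
    intro j
    have key := rec_split n j (fun _ => (1 : ℝ))
    simp only [one_mul] at key
    rw [key, ih j]
    by_cases h0 : ∀ i < n, j.testBit i = false
    · rw [if_pos h0]
      by_cases hj : j.testBit n
      · have hQ : ¬ ∀ i < n + 1, j.testBit i = false := by
          intro h; exact absurd (h n (Nat.lt_succ_self n)) (by simp [hj])
        rw [if_neg hQ, if_pos hj]; ring
      · have hQ : ∀ i < n + 1, j.testBit i = false := by
          intro i hi
          rcases Nat.lt_succ_iff_lt_or_eq.mp hi with h' | h'
          · exact h0 i h'
          · subst h'; simpa using hj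
        rw [if_pos hQ, if_neg hj, pow_succ]; push_cast; ring
    · rw [if_neg h0]
      have hQ : ¬ ∀ i < n + 1, j.testBit i = false := by
        intro h; exact h0 fun i hi => h i (hi.trans (Nat.lt_succ_self n))
      rw [if_neg hQ]; ring

lemma hw_succ (n j : ℕ) : hw (n + 1) j = hw n j + if j.testBit n then 1 else 0 :=
  Finset.sum_range_succ _ _

lemma hw_eq_zero_iff (n j : ℕ) : hw n j = 0 ↔ ∀ i < n, j.testBit i = false := by
  unfold hw
  rw [Finset.sum_eq_zero_iff]
  constructor
  · intro h i hi
    have := h i (Finset.mem_range.mpr hi)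
    by_contra hb
    simp [Bool.not_eq_false] at hb
    simp [hb] at this
  · intro h i hi
    simp [h i (Finset.mem_range.mp hi)]

/-- S for hw = 0. -/
lemma lemS0 (n j : ℕ) (h : ∀ i < n, j.testBit i = false) :
    ∑ s ∈ Finset.range (2 ^ n), (s : ℝ) * (-1 : ℝ) ^ bip n j s
      = (2 ^ n : ℝ) * ((2 ^ n : ℝ) - 1) / 2 := by
  have hb : ∀ s, bip n j s = 0 := by
    intro s
    apply Finset.sum_eq_zero
    intro i hi
    simp [h i (Finset.mem_range.mp hi)]
  simp only [hb, pow_zero, mul_one]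
  have gauss : ∀ m : ℕ, ∑ i ∈ Finset.range m, (i : ℝ) = (m : ℝ) * ((m : ℝ) - 1) / 2 := by
    intro m
    induction m with
    | zero => simp
    | succ m ih => rw [Finset.sum_range_succ, ih]; push_cast; ring
  rw [gauss (2 ^ n)]
  push_cast
  ring

/-- S for hw = 1, bit at k. -/
lemma lemS1 (n : ℕ) : ∀ j k : ℕ, k < n → j.testBit k = true →
    (∀ i < n, i ≠ k → j.testBit i = false) →
    ∑ s ∈ Finset.range (2 ^ n), (s : ℝ) * (-1 : ℝ) ^ bip n j s
      = -((2 ^ n : ℝ) * (2 : ℝ) ^ k / 2) := by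
  induction n with
  | zero => intro j k hk; omega
  | succ n ih =>
    intro j k hk hjk hone
    have key := rec_split n j (fun s => (s : ℝ))
    rw [key]
    by_cases hjn : j.testBit n
    · -- then k = n (since bit n set and all others off)
      have hkn : n = k := by
        by_contra hne
        have := hone n (Nat.lt_succ_self n) (fun h => hne h)
        simp [hjn] at this
      subst hkn
      have h0 : ∀ i < n, j.testBit i = false := fun i hi =>
        hone i (hi.trans (Nat.lt_succ_self n)) (Nat.ne_of_lt hi)
      rw [lemS0 n j h0]
      have hA := lemA n j
      rw [if_pos h0] at hA
      have : ∑ t ∈ Finset.range (2 ^ n), ((2 ^ n + t : ℕ) : ℝ) * (-1 : ℝ) ^ bip n j t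
          = (2 ^ n : ℝ) * (2 ^ n : ℝ) + (2 ^ n : ℝ) * ((2 ^ n : ℝ) - 1) / 2 := by
        have : ∀ t : ℕ, ((2 ^ n + t : ℕ) : ℝ) * (-1 : ℝ) ^ bip n j t
            = (2 ^ n : ℝ) * (-1 : ℝ) ^ bip n j t + (t : ℝ) * (-1 : ℝ) ^ bip n j t := by
          intro t; push_cast; ring
        rw [Finset.sum_congr rfl (fun t _ => this t), Finset.sum_add_distrib,
          ← Finset.mul_sum, hA, lemS0 n j h0]
      rw [this, if_pos hjn]
      push_cast
      ring
    · have hkn : k < n := by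
        rcases Nat.lt_succ_iff_lt_or_eq.mp hk with h | h
        · exact h
        · subst h; simp [hjk] at hjn
      have hone' : ∀ i < n, i ≠ k → j.testBit i = false := fun i hi =>
        hone i (hi.trans (Nat.lt_succ_self n))
      have hA := lemA n j
      have hnz : ¬ ∀ i < n, j.testBit i = false := by
        intro h; have := h k hkn; simp [hjk] at this
      rw [if_neg hnz] at hA
      have hS := ih j k hkn hjk hone'
      have : ∑ t ∈ Finset.range (2 ^ n), ((2 ^ n + t : ℕ) : ℝ) * (-1 : ℝ) ^ bip n j t
          = -((2 ^ n : ℝ) * (2 : ℝ) ^ k / 2) := by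
        have hsplit : ∀ t : ℕ, ((2 ^ n + t : ℕ) : ℝ) * (-1 : ℝ) ^ bip n j t
            = (2 ^ n : ℝ) * (-1 : ℝ) ^ bip n j t + (t : ℝ) * (-1 : ℝ) ^ bip n j t := by
          intro t; push_cast; ring
        rw [Finset.sum_congr rfl (fun t _ => hsplit t), Finset.sum_add_distrib,
          ← Finset.mul_sum, hA, hS]
        ring
      rw [this, hS, if_neg hjn]
      push_cast
      ring

/-- S for hw ≥ 2. -/
lemma lemS2 (n : ℕ) : ∀ j : ℕ, 2 ≤ hw n j →
    ∑ s ∈ Finset.range (2 ^ n), (s : ℝ) * (-1 : ℝ) ^ bip n j s = 0 := by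
  induction n with
  | zero => intro j h; simp [hw] at h
  | succ n ih =>
    intro j h
    have key := rec_split n j (fun s => (s : ℝ))
    rw [key]
    rw [hw_succ] at h
    by_cases h2 : 2 ≤ hw n j
    · have hS := ih j h2
      have hA := lemA n j
      have hnz : ¬ ∀ i < n, j.testBit i = false := by
        intro hz
        rw [← hw_eq_zero_iff] at hz
        omega
      rw [if_neg hnz] at hA
      have : ∑ t ∈ Finset.range (2 ^ n), ((2 ^ n + t : ℕ) : ℝ) * (-1 : ℝ) ^ bip n j t = 0 := by
        have hsplit : ∀ t : ℕ, ((2 ^ n + t : ℕ) : ℝ) * (-1 : ℝ) ^ bip n j t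
            = (2 ^ n : ℝ) * (-1 : ℝ) ^ bip n j t + (t : ℝ) * (-1 : ℝ) ^ bip n j t := by
          intro t; push_cast; ring
        rw [Finset.sum_congr rfl (fun t _ => hsplit t), Finset.sum_add_distrib,
          ← Finset.mul_sum, hA, hS]
        ring
      rw [this, hS]
      ring
    · -- hw n j = 1 and j.testBit n = true
      have hjn : j.testBit n = true := by
        by_contra hb
        simp [Bool.not_eq_true] at hb
        simp [hb] at h
        omega
      have h1 : hw n j = 1 := by simp [hjn] at h; omega
      have hA := lemA n j
      have hnz : ¬ ∀ i < n, j.testBit i = false := by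
        intro hz
        rw [← hw_eq_zero_iff] at hz
        omega
      rw [if_neg hnz] at hA
      have : ∑ t ∈ Finset.range (2 ^ n), ((2 ^ n + t : ℕ) : ℝ) * (-1 : ℝ) ^ bip n j t
          = ∑ t ∈ Finset.range (2 ^ n), (t : ℝ) * (-1 : ℝ) ^ bip n j t := by
        have hsplit : ∀ t : ℕ, ((2 ^ n + t : ℕ) : ℝ) * (-1 : ℝ) ^ bip n j t
            = (2 ^ n : ℝ) * (-1 : ℝ) ^ bip n j t + (t : ℝ) * (-1 : ℝ) ^ bip n j t := by
          intro t; push_cast; ring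
        rw [Finset.sum_congr rfl (fun t _ => hsplit t), Finset.sum_add_distrib,
          ← Finset.mul_sum, hA]
        ring
      rw [this, if_pos hjn]
      ring

/-- For `S¹_j := ∑_{s<2^n} s (-1)^{j·s}`:
`S¹_0 = N(N-1)/2`, `S¹_{2^i} = -N·2^i/2 = -2^{n+i-1}`, and `S¹_j = 0` if `w(j) ≥ 2`. -/
theorem walsh_sum_linear (n : ℕ) (hn : 1 ≤ n) :
    (∑ s ∈ Finset.range (2 ^ n), (s : ℝ) * (-1 : ℝ) ^ bip n 0 s =
        (2 ^ n : ℝ) * ((2 ^ n : ℝ) - 1) / 2) ∧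
    (∀ i < n,
      ∑ s ∈ Finset.range (2 ^ n), (s : ℝ) * (-1 : ℝ) ^ bip n (2 ^ i) s =
        -((2 ^ n : ℝ) * (2 : ℝ) ^ i / 2)) ∧
    (∀ j < 2 ^ n, 2 ≤ hw n j →
      ∑ s ∈ Finset.range (2 ^ n), (s : ℝ) * (-1 : ℝ) ^ bip n j s = 0) := by
  refine ⟨?_, ?_, ?_⟩
  · exact lemS0 n 0 (fun i _ => Nat.zero_testBit i)
  · intro i hi
    apply lemS1 n (2 ^ i) i hi
    · simp [Nat.testBit_two_pow_self]
    · intro k hk hki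
      exact Nat.testBit_two_pow_of_ne (fun h => hki h.symm)
  · intro j hj h2
    exact lemS2 n j h2
end

section
/- With $|\Psi\rangle = \sum_{k,s}\alpha_k\sqrt{p_s}\,|\psi_{s,k}\rangle\otimes|b_k\rangle\otimes|b_s\rangle$ as above ($\|\psi_{s,k}\|=1$, $\sum_k|\alpha_k|^2=1$, $\sum_s p_s = 1$, $p_s\ge 0$), define the projectors $\Pi_k := I\otimes|b_k\rangle\langle b_k|\otimes I$ and $\Pi_s := I\otimes I\otimes|b_s\rangle\langle b_s|$. Then for every $s$ with $p_s>0$ and every $k$: $\langle\Psi|\Pi_k\Pi_s|\Psi\rangle / \langle\Psi|\Pi_s|\Psi\rangle = |\alpha_k|^2 = \langle\Psi|\Pi_k|\Psi\rangle$. In particular, the conditional distribution of the first-register measurement outcome given the scenario-register outcome equals its marginal distribution, for every scenario. -/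
/-- Non-anticipativity (Proposition 2): in the qGAN-QAOA state
`Ψ(t,k,s) = α_k √(p_s) ψ_{s,k}(t)`, for every scenario `s` with `p_s > 0` and every
`k`, the conditional probability of the first-register outcome `k` given the
scenario-register outcome `s` equals its marginal probability `|α_k|²`. -/
theorem qgan_qaoa_non_anticipativity (d K S : ℕ)
    (ψ : Fin S → Fin K → Fin d → ℂ) (α : Fin K → ℂ) (p : Fin S → ℝ)
    (hψ : ∀ s k, ∑ t, Complex.normSq (ψ s k t) = 1)
    (hα : ∑ k, Complex.normSq (α k) = 1)
    (hp : ∀ s, 0 ≤ p s) (hps : ∑ s, p s = 1)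
    (Ψ : Fin d → Fin K → Fin S → ℂ)
    (hΨ : ∀ t k s, Ψ t k s = α k * (Real.sqrt (p s) : ℂ) * ψ s k t)
    (s : Fin S) (hs : 0 < p s) (k : Fin K) :
    (∑ t, Complex.normSq (Ψ t k s)) / (∑ t, ∑ k', Complex.normSq (Ψ t k' s)) =
        Complex.normSq (α k) ∧
    ∑ t, ∑ s', Complex.normSq (Ψ t k s') = Complex.normSq (α k) := by
  have key : ∀ (k' : Fin K) (s' : Fin S),
      ∑ t, Complex.normSq (Ψ t k' s') = Complex.normSq (α k') * p s' := by
    intro k' s'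
    have : ∀ t, Complex.normSq (Ψ t k' s')
        = Complex.normSq (α k') * p s' * Complex.normSq (ψ s' k' t) := by
      intro t
      rw [hΨ, Complex.normSq_mul, Complex.normSq_mul, Complex.normSq_ofReal,
        Real.mul_self_sqrt (hp s')]
    simp only [this]
    rw [← Finset.mul_sum, hψ, mul_one]
  constructor
  · have h1 : ∑ t, ∑ k', Complex.normSq (Ψ t k' s) = p s := by
      rw [Finset.sum_comm]
      simp only [key]
      rw [← Finset.sum_mul, hα, one_mul]
    rw [h1, key, mul_div_assoc, div_self hs.ne', mul_one]
  · rw [Finset.sum_comm]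
    simp only [key]
    rw [← Finset.mul_sum, hps, mul_one]
end
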